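/- arXiv:1506.07839 — 4 statements merged into one kernel-verified Lean document; each statement's English description precedes it below -/
import Mathlib

section
/- Let R be a commutative integral domain and let z ∈ R[X]. Then every divisor d of z in R[X] that is not a unit is divisible by X (i.e., for all d ∈ R[X], d ∣ z and ¬(d ∣ 1) imply X ∣ d) if and only if there exist a natural number n and a unit a of R with z = C a · X^n. -/
/-!
If `z = C a * Xⁿ` with `a` a unit, every divisor of `z` is associated to some `Xⁱ` because `X`
is prime, and a non-unit one has `i ≥ 1`. Conversely, the hypothesis forces `z ≠ 0` (otherwise
the non-unit `X + 1 ∣ 0` would be divisible by `X`); splitting off the full power of `X`,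
`z = Xᵏ * w` with `X ∤ w`, the divisor `w` must then be a unit, i.e. a unit constant.
-/

theorem Prime.dvd_of_dvd_mul_pow_of_not_dvd_one {M : Type*} [CommMonoidWithZero M]
    [IsCancelMulZero M] {p u d : M} {n : ℕ} (hp : Prime p) (hu : IsUnit u)
    (hd : d ∣ u * p ^ n) (hd1 : ¬ d ∣ 1) : p ∣ d := by
  obtain ⟨i, -, hdi⟩ := (dvd_prime_pow hp n).1 ((hu.dvd_mul_left).1 hd)
  cases i with
  | zero => exact absurd (pow_zero p ▸ hdi).dvd hd1
  | succ i => exact (dvd_pow_self p i.succ_ne_zero).trans hdi.symm.dvd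

namespace Polynomial

variable {R : Type*} [CommRing R] [IsDomain R]

theorem ne_zero_of_forall_dvd_not_dvd_one_X_dvd {z : R[X]}
    (h : ∀ d : R[X], d ∣ z → ¬ d ∣ 1 → X ∣ d) : z ≠ 0 := by
  rintro rfl
  have hX : X ∣ X + C (1 : R) :=
    h _ (dvd_zero _) fun h1 => not_isUnit_X_add_C 1 (isUnit_of_dvd_one h1)
  simp [X_dvd_iff] at hX

theorem exists_eq_C_mul_X_pow_of_forall_dvd_not_dvd_one_X_dvd {z : R[X]} (hz : z ≠ 0)
    (h : ∀ d : R[X], d ∣ z → ¬ d ∣ 1 → X ∣ d) : ∃ (n : ℕ) (a : Rˣ), z = C (a : R) * X ^ n := by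
  obtain ⟨w, hzw, hXw⟩ := exists_eq_pow_rootMultiplicity_mul_and_not_dvd z hz 0
  rw [C_0, sub_zero] at hzw hXw
  have hw : IsUnit w := by
    by_contra hw
    exact hXw (h w (hzw ▸ dvd_mul_left w _) fun h1 => hw (isUnit_of_dvd_one h1))
  obtain ⟨a, ha, rfl⟩ := isUnit_iff.1 hw
  exact ⟨_, ha.unit, by rw [hzw, mul_comm, IsUnit.unit_spec]⟩

end Polynomial

open Polynomial in
theorem stmt_6 {R : Type*} [CommRing R] [IsDomain R] (z : R[X]) :
    (∀ d : R[X], d ∣ z → ¬ d ∣ 1 → (X : R[X]) ∣ d) ↔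
      ∃ (n : ℕ) (a : Rˣ), z = C (a : R) * X ^ n := by
  refine ⟨fun h => exists_eq_C_mul_X_pow_of_forall_dvd_not_dvd_one_X_dvd
    (ne_zero_of_forall_dvd_not_dvd_one_X_dvd h) h, ?_⟩
  rintro ⟨n, a, rfl⟩ d hd hd1
  exact prime_X.dvd_of_dvd_mul_pow_of_not_dvd_one (isUnit_C.2 a.isUnit) hd hd1
end

section
/- Let R be a commutative integral domain and let z ∈ R[X]. Then z = X^n for some natural number n ≥ 0 if and only if the following two conditions hold: (i) for all d ∈ R[X], if d ∣ z and ¬(d ∣ 1), then X ∣ d; and (ii) (X − 1) ∣ (z − 1). -/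
/-!
Both conditions are read off the factorisation `z = X ^ n * w` with `X ∤ w` (which exists as soon
as `z ≠ 0`). Condition (i), applied to `d = w`, says exactly that `w` is a unit, i.e. a constant
`C r`; condition (ii) says `z(1) = 1`, which forces `z ≠ 0` and `r = 1`. Conversely the divisors of
`X ^ n` are the associates of the powers of the prime `X`.
-/

open Polynomial

theorem Prime.dvd_of_dvd_pow_of_not_dvd_one {M : Type*} [CommMonoidWithZero M] [IsCancelMulZero M]
    {p d : M} (hp : Prime p) {n : ℕ} (hd : d ∣ p ^ n) (hd1 : ¬ d ∣ 1) : p ∣ d := by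
  obtain ⟨i, -, hi⟩ := (dvd_prime_pow hp n).mp hd
  rcases Nat.eq_zero_or_pos i with rfl | hi_pos
  · exact absurd (hi.dvd.trans (pow_zero p).dvd) hd1
  · exact (dvd_pow_self p hi_pos.ne').trans hi.symm.dvd

namespace Polynomial

variable {R : Type*} [CommRing R]

theorem X_sub_one_dvd_sub_one_iff {z : R[X]} : (X - 1 : R[X]) ∣ z - 1 ↔ z.eval 1 = 1 := by
  rw [← C_1, dvd_iff_isRoot, IsRoot, eval_sub, eval_C, sub_eq_zero]

theorem exists_eq_X_pow_mul_C_of_X_dvd_nonunit_divisors [IsDomain R] {z : R[X]} (hz : z ≠ 0)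
    (h : ∀ d : R[X], d ∣ z ∧ ¬ d ∣ 1 → X ∣ d) : ∃ (n : ℕ) (r : R), z = X ^ n * C r := by
  obtain ⟨w, hzw, hXw⟩ := exists_eq_pow_rootMultiplicity_mul_and_not_dvd z hz 0
  rw [C_0, sub_zero] at hzw hXw
  have hw : w ∣ 1 := by
    by_contra hw
    exact hXw (h w ⟨hzw ▸ dvd_mul_left w _, hw⟩)
  obtain ⟨r, -, rfl⟩ := isUnit_iff.mp (isUnit_of_dvd_one hw)
  exact ⟨_, r, hzw⟩

end Polynomial

open Polynomial in
theorem stmt_7 {R : Type*} [CommRing R] [IsDomain R] (z : R[X]) :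
    (∃ n : ℕ, z = (X : R[X]) ^ n) ↔
      ((∀ d : R[X], d ∣ z ∧ ¬ d ∣ 1 → (X : R[X]) ∣ d) ∧
        ((X : R[X]) - 1) ∣ (z - 1)) := by
  rw [X_sub_one_dvd_sub_one_iff]
  constructor
  · rintro ⟨n, rfl⟩
    exact ⟨fun d ⟨hd, hd1⟩ => prime_X.dvd_of_dvd_pow_of_not_dvd_one hd hd1, by simp⟩
  · rintro ⟨hdiv, heval⟩
    have hz : z ≠ 0 := by
      rintro rfl
      simp at heval
    obtain ⟨n, r, rfl⟩ := exists_eq_X_pow_mul_C_of_X_dvd_nonunit_divisors hz hdiv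
    have hr : r = 1 := by simpa using heval
    exact ⟨n, by rw [hr, C_1, mul_one]⟩
end

section
/- Let K be a field of characteristic zero. Then the image of ℤ in the polynomial ring K[X] is definable with parameters in the first-order language of rings in K[X]. -/
/-- A subset `s` of a ring `R` is definable with parameters in the first-order
language of rings if it is definable over the parameter set `Set.univ` in the
language `FirstOrder.Language.ring`, where `R` is viewed as a structure for that
language via its ring operations. -/
def DefinableInRingLang (R : Type*) [Ring R] (s : Set R) : Prop :=
  letI := FirstOrder.Ring.compatibleRingOfRing R
  Set.Definable₁ (Set.univ : Set R) FirstOrder.Language.ring s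

/-!
Over a domain `R` with `2 ≠ 0`, every solution of the polynomial Pell equation
`x ^ 2 - (X ^ 2 - 1) * y ^ 2 = 1` in `R[X]` has `y(1) ∈ ℤ`: after fixing the sign of `x` so that
the leading coefficients of `x` and `X * y` agree, multiplying `x + y √(X ^ 2 - 1)` by the unit
`X - √(X ^ 2 - 1)` gives a solution with `y` replaced by `X * y - x`, of smaller degree, and
`y(1)` changes by `x(1) = ±1`. Conversely the Chebyshev solutions `(T n, U (n - 1))` have
`U (n - 1) (1) = n`. Hence `f ∈ K[X]` is an integer iff `f` is constant, i.e. `f ^ 2 * u = f` for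
some `u`, and `f ≡ y mod (X - 1)` for some Pell solution `(x, y)`: an existential formula with
the parameter `X`.
-/

open Polynomial FirstOrder FirstOrder.Language FirstOrder.Ring

namespace Polynomial

section CommRing

variable {R : Type*} [CommRing R] {x y : R[X]}

def IsPellSolution (x y : R[X]) : Prop :=
  x ^ 2 - (X ^ 2 - 1) * y ^ 2 = 1

theorem isPellSolution_neg_left_iff : IsPellSolution (-x) y ↔ IsPellSolution x y := by
  rw [IsPellSolution, IsPellSolution, neg_sq]

theorem isPellSolution_next_iff :
    IsPellSolution (X * x + (X ^ 2 - 1) * y) (X * y + x) ↔ IsPellSolution x y := by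
  rw [IsPellSolution, IsPellSolution, show (X * x + (X ^ 2 - 1) * y) ^ 2 -
    (X ^ 2 - 1) * (X * y + x) ^ 2 = x ^ 2 - (X ^ 2 - 1) * y ^ 2 by ring]

theorem IsPellSolution.prev (h : IsPellSolution x y) :
    IsPellSolution (X * x - (X ^ 2 - 1) * y) (X * y - x) := by
  unfold IsPellSolution at h ⊢
  linear_combination h

theorem IsPellSolution.eval_one_left_sq (h : IsPellSolution x y) : x.eval 1 ^ 2 = 1 := by
  simpa [IsPellSolution] using congrArg (eval 1) h

theorem Chebyshev.isPellSolution_T_U (n : ℤ) : IsPellSolution (T R n) (U R (n - 1)) := by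
  have hstep (n : ℤ) : T R (n + 1) = X * T R n + (X ^ 2 - 1) * U R (n - 1) ∧
      U R n = X * U R (n - 1) + T R n := by
    have hT := T_eq_X_mul_T_sub_pol_U R (n - 1)
    have hU := U_eq_X_mul_U_add_T R (n - 1)
    rw [sub_add_cancel, show n - 1 + 2 = n + 1 by ring] at hT
    rw [sub_add_cancel] at hU
    exact ⟨by rw [hT]; ring, hU⟩
  induction n using Int.induction_on with
  | zero => simp [IsPellSolution]
  | succ i ih =>
    rw [(hstep i).1, add_sub_cancel_right, (hstep i).2]
    exact isPellSolution_next_iff.2 ih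
  | pred i ih =>
    obtain ⟨hT, hU⟩ := hstep (-i - 1)
    rw [sub_add_cancel] at hT
    rw [hT, hU] at ih
    exact isPellSolution_next_iff.1 ih

end CommRing

section IsDomain

variable {R : Type*} [CommRing R] [IsDomain R] {x y : R[X]}

theorem IsPellSolution.natDegree_left_and_leadingCoeff_left_sq (h : IsPellSolution x y)
    (hy : y ≠ 0) :
    x.natDegree = y.natDegree + 1 ∧ x.leadingCoeff ^ 2 = y.leadingCoeff ^ 2 := by
  have hD : (X ^ 2 - 1 : R[X]).Monic := (monic_X_pow 2).sub_of_left (by simp)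
  have hDdeg : (X ^ 2 - 1 : R[X]).natDegree = 2 := by
    simpa using natDegree_X_pow_sub_C (n := 2) (r := (1 : R))
  have hDy : ((X ^ 2 - 1) * y ^ 2).natDegree = 2 * (y.natDegree + 1) := by
    rw [natDegree_mul hD.ne_zero (pow_ne_zero 2 hy), hDdeg, natDegree_pow]; ring
  have hsq : x ^ 2 = (X ^ 2 - 1) * y ^ 2 + 1 := by
    unfold IsPellSolution at h
    linear_combination h
  have hlt : (1 : R[X]).degree < ((X ^ 2 - 1) * y ^ 2).degree := by
    rw [degree_one, degree_eq_natDegree (by intro h0; simp [h0] at hDy), hDy]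
    exact_mod_cast Nat.succ_pos _
  constructor
  · have := congrArg natDegree hsq
    rw [natDegree_pow, natDegree_add_eq_left_of_degree_lt hlt, hDy] at this
    omega
  · have := congrArg leadingCoeff hsq
    rwa [leadingCoeff_pow, leadingCoeff_add_of_degree_lt' hlt, leadingCoeff_mul, hD.leadingCoeff,
      one_mul, leadingCoeff_pow] at this

variable [NeZero (2 : R)]

theorem IsPellSolution.natDegree_prev_lt (h : IsPellSolution x y) (hy : y ≠ 0)
    (hlc : x.leadingCoeff = y.leadingCoeff) (hp : X * y - x ≠ 0) :
    (X * y - x).natDegree < y.natDegree := by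
  set d := y.natDegree
  have hx : x.natDegree = d + 1 := (h.natDegree_left_and_leadingCoeff_left_sq hy).1
  have hq_coeff : (X * y + x).coeff (d + 1) ≠ 0 := by
    rw [coeff_add, coeff_X_mul, ← hx, coeff_natDegree, coeff_natDegree, hlc, ← two_mul]
    exact mul_ne_zero two_ne_zero (leadingCoeff_ne_zero.2 hy)
  have hq : (X * y + x).natDegree = d + 1 := by
    refine natDegree_eq_of_le_of_coeff_ne_zero ?_ hq_coeff
    refine natDegree_add_le_of_degree_le ?_ hx.le
    exact natDegree_mul_le.trans (by simp [d, add_comm])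
  -- `X * y + x` has degree `d + 1`, so its cofactor `X * y - x` in `y ^ 2 - 1` has degree `< d`.
  have hpq : (X * y - x) * (X * y + x) = y ^ 2 - 1 := by
    unfold IsPellSolution at h
    linear_combination -h
  have : (X * y - x).natDegree + (d + 1) ≤ 2 * d := by
    rw [← hq, ← natDegree_mul hp (by rintro h0; simp [h0] at hq_coeff), hpq]
    exact (natDegree_sub_le _ _).trans (by simp [natDegree_pow, d])
  omega

theorem IsPellSolution.eval_one_right_mem_range_intCast (h : IsPellSolution x y) :
    y.eval 1 ∈ Set.range (Int.cast : ℤ → R) := by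
  induction hd : y.natDegree using Nat.strong_induction_on generalizing x y with
  | _ d ih =>
  rcases eq_or_ne y 0 with rfl | hy
  · exact ⟨0, by simp⟩
  obtain ⟨x', hx', hlc⟩ : ∃ x', IsPellSolution x' y ∧ x'.leadingCoeff = y.leadingCoeff := by
    have hsq := (h.natDegree_left_and_leadingCoeff_left_sq hy).2
    rcases sq_eq_sq_iff_eq_or_eq_neg.1 hsq with hlc | hlc
    · exact ⟨x, h, hlc⟩
    · exact ⟨-x, isPellSolution_neg_left_iff.2 h, by rw [leadingCoeff_neg, hlc, neg_neg]⟩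
  obtain ⟨n, hn⟩ : x'.eval 1 ∈ Set.range (Int.cast : ℤ → R) := by
    rcases sq_eq_one_iff.1 hx'.eval_one_left_sq with h1 | h1
    · exact ⟨1, by simp [h1]⟩
    · exact ⟨-1, by simp [h1]⟩
  obtain ⟨m, hm⟩ : (X * y - x').eval 1 ∈ Set.range (Int.cast : ℤ → R) := by
    rcases eq_or_ne (X * y - x') 0 with hp | hp
    · exact ⟨0, by simp [hp]⟩
    · exact ih _ (hd ▸ hx'.natDegree_prev_lt hy hlc hp) hx'.prev rfl
  refine ⟨m + n, ?_⟩
  rw [Int.cast_add, hm, hn]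
  simp

theorem exists_isPellSolution_eval_one_eq_iff {a : R} :
    (∃ x y : R[X], IsPellSolution x y ∧ y.eval 1 = a) ↔
      a ∈ Set.range (Int.cast : ℤ → R) := by
  constructor
  · rintro ⟨x, y, h, rfl⟩
    exact h.eval_one_right_mem_range_intCast
  · rintro ⟨n, rfl⟩
    exact ⟨_, _, Chebyshev.isPellSolution_T_U n, by simp [Chebyshev.U_eval_one]⟩

end IsDomain

theorem mem_range_intCast_iff_mem_range_C_and_eval {R : Type*} [CommRing R] (f : R[X])
    (a : R) :
    f ∈ Set.range (Int.cast : ℤ → R[X]) ↔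
      f ∈ Set.range C ∧ f.eval a ∈ Set.range (Int.cast : ℤ → R) := by
  constructor
  · rintro ⟨n, rfl⟩
    exact ⟨⟨n, C_eq_intCast n⟩, n, by simp⟩
  · rintro ⟨⟨c, rfl⟩, n, hn⟩
    rw [eval_C] at hn
    exact ⟨n, by rw [← C_eq_intCast, hn]⟩

theorem mem_range_C_iff_exists_sq_mul_eq {K : Type*} [Field K] (f : K[X]) :
    f ∈ Set.range C ↔ ∃ u, f ^ 2 * u = f := by
  constructor
  · rintro ⟨c, rfl⟩
    exact ⟨C c⁻¹, by rw [← C_pow, ← C_mul]; congr 1; field_simp⟩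
  · rintro ⟨u, hu⟩
    rcases mul_eq_zero.1 (show f * (f * u - 1) = 0 by linear_combination hu) with hf | hf
    · exact ⟨0, by simp [hf]⟩
    · obtain ⟨c, -, hc⟩ := isUnit_iff.1 (IsUnit.of_mul_eq_one u (sub_eq_zero.1 hf))
      exact ⟨c, hc⟩

theorem mem_range_intCast_iff_exists_isPellSolution {K : Type*} [Field K] [NeZero (2 : K)]
    (f : K[X]) :
    f ∈ Set.range (Int.cast : ℤ → K[X]) ↔
      (∃ u, f ^ 2 * u = f) ∧ ∃ x y, IsPellSolution x y ∧ X - 1 ∣ y - f := by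
  simp only [mem_range_intCast_iff_mem_range_C_and_eval f 1, mem_range_C_iff_exists_sq_mul_eq,
    ← exists_isPellSolution_eval_one_eq_iff, ← C_1, dvd_iff_isRoot, IsRoot.def, eval_sub,
    sub_eq_zero]

end Polynomial

theorem Set.definable_setOf_exists_forall_lift_eq_zero {R : Type*} [CommRing R]
    [CompatibleRing R] (A : Set R) {α β ι : Type*} [Finite β] [Finite ι]
    (p : ι → FreeCommRing (A ⊕ α ⊕ β)) :
    A.Definable Language.ring
      {v : α → R | ∃ w : β → R, ∀ i,
        FreeCommRing.lift (Sum.elim (↑) (Sum.elim v w)) (p i) = 0} := by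
  have hS : A.Definable Language.ring
      {u | ∀ i, FreeCommRing.lift (Sum.elim (↑) u) (p i) = 0} := by
    rw [Set.ofPred_forall]
    refine definable_iInter_of_finite fun i => ?_
    rw [definable_iff_exists_formula_sum]
    exact ⟨(termOfFreeCommRing (p i)).equal 0, by ext; simp⟩
  exact hS.exists_of_finite

open Polynomial in
theorem stmt_11 {K : Type*} [Field K] [CharZero K] :
    DefinableInRingLang (K[X]) (Set.range (Int.cast : ℤ → K[X])) := by
  let := compatibleRingOfRing K[X]
  unfold DefinableInRingLang Set.Definable₁
  let f : FreeCommRing ((Set.univ : Set K[X]) ⊕ Fin 1 ⊕ Fin 4) := .of (.inr (.inl 0))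
  let w (i : Fin 4) : FreeCommRing ((Set.univ : Set K[X]) ⊕ Fin 1 ⊕ Fin 4) :=
    .of (.inr (.inr i))
  let t : FreeCommRing ((Set.univ : Set K[X]) ⊕ Fin 1 ⊕ Fin 4) := .of (.inl ⟨X, trivial⟩)
  convert Set.definable_setOf_exists_forall_lift_eq_zero Set.univ
    ![f ^ 2 * w 0 - f, w 1 ^ 2 - (t ^ 2 - 1) * w 2 ^ 2 - 1, w 2 - f - (t - 1) * w 3] using 1
  ext v
  rw [Set.mem_ofPred_eq, mem_range_intCast_iff_exists_isPellSolution]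
  simp [Fin.forall_fin_succ, Fin.exists_fin_succ_pi, f, w, t, IsPellSolution, dvd_def,
    sub_eq_zero]
end

section
/- Let R be a nontrivial commutative ring of characteristic zero. Suppose that in the polynomial ring R[X] both the set of constant polynomials {C r : r ∈ R} and the set of positive powers {X^n : n ∈ ℕ, n ≥ 1} are definable with parameters in the first-order language of rings. Then the image of ℤ in R[X] is definable with parameters in the first-order language of rings in R[X]. -/
/-!
The integers are recovered from the constants and the powers of `X` by differentiating at `1`:
since `X ^ a ≡ 1 + a (X - 1)` modulo `(X - 1) ^ 2`, a constant `C r` satisfies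
`(X - 1) * C r ≡ X ^ a - X ^ b` modulo `(X - 1) ^ 2` exactly when `r = a - b`, and every integer
is such a difference with `a, b ≥ 1`. This congruence is a first-order condition on `C r`,
`X ^ a`, `X ^ b` with the parameter `X`.
-/

open FirstOrder Language

namespace Set

variable {M : Type*} {A : Set M} {α : Type*}

section

variable {L : Language} [L.Structure M]

theorem definableFun_of_realize_eq (t : L.Term α) {f : (α → M) → M}
    (h : ∀ v, t.realize v = f v) : A.DefinableFun L f := by
  rw [← funext h]
  exact t.definableFun_realize.of_empty

theorem Definable₁.preimage_definableFun {s : Set M}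
    (hs : A.Definable₁ L s) {f : (α → M) → M} (hf : A.DefinableFun L f) :
    A.Definable L {v | f v ∈ s} :=
  hs.preimage_map (F := fun v => ![f v]) (by simp [DefinableMap, hf])

theorem DefinableFun.comp₁ {op : M → M} (hop : A.DefinableFun L fun w : Fin 1 → M => op (w 0))
    {f : (α → M) → M} (hf : A.DefinableFun L f) :
    A.DefinableFun L fun v => op (f v) :=
  hop.comp (g := fun v => ![f v]) (by simp [DefinableMap, hf])

theorem DefinableFun.comp₂ {op : M → M → M}
    (hop : A.DefinableFun L fun w : Fin 2 → M => op (w 0) (w 1)) {f g : (α → M) → M}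
    (hf : A.DefinableFun L f) (hg : A.DefinableFun L g) :
    A.DefinableFun L fun v => op (f v) (g v) :=
  hop.comp (g := fun v => ![f v, g v]) (by simp [DefinableMap, hf, hg])

end

variable [CommRing M] [Ring.CompatibleRing M] {f g : (α → M) → M}

@[fun_prop]
theorem DefinableFun.add (hf : A.DefinableFun Language.ring f)
    (hg : A.DefinableFun Language.ring g) :
    A.DefinableFun Language.ring fun v => f v + g v :=
  .comp₂ (definableFun_of_realize_eq (.var 0 + .var 1) (by simp)) hf hg

@[fun_prop]
theorem DefinableFun.mul (hf : A.DefinableFun Language.ring f)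
    (hg : A.DefinableFun Language.ring g) :
    A.DefinableFun Language.ring fun v => f v * g v :=
  .comp₂ (definableFun_of_realize_eq (.var 0 * .var 1) (by simp)) hf hg

@[fun_prop]
theorem DefinableFun.neg (hf : A.DefinableFun Language.ring f) :
    A.DefinableFun Language.ring fun v => -f v :=
  .comp₁ (definableFun_of_realize_eq (-.var 0) (by simp)) hf

@[fun_prop]
theorem DefinableFun.sub (hf : A.DefinableFun Language.ring f)
    (hg : A.DefinableFun Language.ring g) :
    A.DefinableFun Language.ring fun v => f v - g v := by
  simpa only [sub_eq_add_neg] using hf.add hg.neg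

end Set

theorem sub_one_sq_dvd_pow_sub_one_sub_mul {α : Type*} [CommRing α] (x : α) (n : ℕ) :
    (x - 1) ^ 2 ∣ x ^ n - 1 - n * (x - 1) := by
  induction n with
  | zero => simp
  | succ n ih =>
    obtain ⟨c, hc⟩ := ih
    exact ⟨x * c + n, by push_cast; linear_combination x * hc⟩

namespace Polynomial

variable (R : Type*) [CommRing R]

def positivePowersX : Set R[X] :=
  {z | ∃ n : ℕ, 1 ≤ n ∧ z = X ^ n}

variable {R}

theorem X_sub_one_sq_dvd_iff (r : R) (a b : ℕ) :
    (X - 1) ^ 2 ∣ (X - 1) * C r - (X ^ a - X ^ b) ↔ r = a - b := by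
  have hdiff : (X - 1 : R[X]) ^ 2 ∣
      (X - 1) * C r - (X ^ a - X ^ b) - (X - 1) * C (r - (a - b)) := by
    convert dvd_sub (sub_one_sq_dvd_pow_sub_one_sub_mul (X : R[X]) b)
      (sub_one_sq_dvd_pow_sub_one_sub_mul (X : R[X]) a) using 1
    simp only [map_sub, map_natCast]
    ring
  have hreg : IsLeftRegular (X - 1 : R[X]) := by
    simpa using (monic_X_sub_C (1 : R)).isRegular.left
  rw [dvd_iff_dvd_of_dvd_sub hdiff, sq, hreg.dvd_cancel_left, ← C_1, dvd_iff_isRoot, IsRoot.def,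
    eval_C, sub_eq_zero]

theorem range_intCast_eq :
    Set.range (Int.cast : ℤ → R[X]) =
      {z | z ∈ Set.range C ∧ ∃ p ∈ positivePowersX R, ∃ q ∈ positivePowersX R,
        (X - 1) ^ 2 ∣ (X - 1) * z - (p - q)} := by
  ext z
  constructor
  · rintro ⟨m, rfl⟩
    refine ⟨⟨m, map_intCast C m⟩, _, ⟨m.toNat + 1, le_add_self, rfl⟩,
      _, ⟨(-m).toNat + 1, le_add_self, rfl⟩, ?_⟩
    rw [← map_intCast (C : R →+* R[X]), X_sub_one_sq_dvd_iff]
    have : m = ((m.toNat + 1 : ℕ) : ℤ) - ((-m).toNat + 1 : ℕ) := by omega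
    exact_mod_cast congrArg (Int.cast : ℤ → R) this
  · rintro ⟨⟨r, rfl⟩, _, ⟨a, -, rfl⟩, _, ⟨b, -, rfl⟩, h⟩
    rw [X_sub_one_sq_dvd_iff] at h
    exact ⟨a - b, by simp [h]⟩

end Polynomial

open Polynomial in
theorem stmt_12_general {R : Type*} [CommRing R]
    (hconst : DefinableInRingLang (R[X]) (Set.range (C : R → R[X])))
    (hpow : DefinableInRingLang (R[X]) {z : R[X] | ∃ n : ℕ, 1 ≤ n ∧ z = (X : R[X]) ^ n}) :
    DefinableInRingLang (R[X]) (Set.range (Int.cast : ℤ → R[X])) := by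
  let := Ring.compatibleRingOfRing R[X]
  have hS : (Set.univ : Set R[X]).Definable Language.ring
      {w : Fin 1 ⊕ Fin 3 → R[X] | w (.inl 0) ∈ Set.range C ∧
        w (.inr 0) ∈ positivePowersX R ∧ w (.inr 1) ∈ positivePowersX R ∧
        (X - 1) * w (.inl 0) - (w (.inr 0) - w (.inr 1)) = (X - 1) ^ 2 * w (.inr 2)} :=
    (hconst.preimage_definableFun (by fun_prop)).inter <|
      (hpow.preimage_definableFun (by fun_prop)).inter <|
      (hpow.preimage_definableFun (by fun_prop)).inter <|
      Set.DefinableFun.ofPred_eq (by fun_prop (disch := simp)) (by fun_prop (disch := simp))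
  unfold DefinableInRingLang Set.Definable₁
  convert hS.exists_of_finite using 1
  ext v
  simp [range_intCast_eq, Fin.exists_fin_succ_pi, dvd_def]

open Polynomial in
theorem stmt_12 {R : Type*} [CommRing R] [Nontrivial R] [CharZero R]
    (hconst : DefinableInRingLang (R[X]) (Set.range (C : R → R[X])))
    (hpow : DefinableInRingLang (R[X]) {z : R[X] | ∃ n : ℕ, 1 ≤ n ∧ z = (X : R[X]) ^ n}) :
    DefinableInRingLang (R[X]) (Set.range (Int.cast : ℤ → R[X])) :=
  stmt_12_general hconst hpow
end
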